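/- If a, b ∈ (0,1) and a + b > 1, then L(a,b) < 0, where L(a,b) = −4a + 5a² − 4a³ − 4b + 24ab − 50a²b + 36a³b + 5b² − 50ab² + 122a²b² − 84a³b² − 4b³ + 36ab³ − 84a²b³ + 56a³b³. -/
import Mathlib


/-- The symmetric polynomial appearing as the last factor in the factorization
of the serve-order difference in the expected set margin. -/
def L (a b : ℝ) : ℝ :=
  -4*a + 5*a^2 - 4*a^3 - 4*b + 24*a*b - 50*a^2*b + 36*a^3*b + 5*b^2
    - 50*a*b^2 + 122*a^2*b^2 - 84*a^3*b^2 - 4*b^3 + 36*a*b^3 - 84*a^2*b^3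
    + 56*a^3*b^3

theorem L_neg (a b : ℝ) (ha : a ∈ Set.Ioo (0:ℝ) 1) (hb : b ∈ Set.Ioo (0:ℝ) 1)
    (hsum : a + b > 1) : L a b < 0 := by
  obtain ⟨ha0, ha1⟩ := ha
  obtain ⟨hb0, hb1⟩ := hb
  have hx : (0:ℝ) < 1 - a := by linarith
  have hy : (0:ℝ) < 1 - b := by linarith
  have t01 : 0 < (1-a)^3 * b * (1-b)^2 :=
    mul_pos (mul_pos (pow_pos hx 3) hb0) (pow_pos hy 2)
  have t02 : 0 < (1-a)^3 * b^2 * (1-b) :=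
    mul_pos (mul_pos (pow_pos hx 3) (pow_pos hb0 2)) hy
  have t03 : 0 < (1-a)^3 * b^3 := mul_pos (pow_pos hx 3) (pow_pos hb0 3)
  have t10 : 0 < a * (1-a)^2 * (1-b)^3 :=
    mul_pos (mul_pos ha0 (pow_pos hx 2)) (pow_pos hy 3)
  have t12 : 0 < a * (1-a)^2 * b^2 * (1-b) :=
    mul_pos (mul_pos (mul_pos ha0 (pow_pos hx 2)) (pow_pos hb0 2)) hy
  have t13 : 0 < a * (1-a)^2 * b^3 :=
    mul_pos (mul_pos ha0 (pow_pos hx 2)) (pow_pos hb0 3)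
  have t20 : 0 < a^2 * (1-a) * (1-b)^3 :=
    mul_pos (mul_pos (pow_pos ha0 2) hx) (pow_pos hy 3)
  have t21 : 0 < a^2 * (1-a) * b * (1-b)^2 :=
    mul_pos (mul_pos (mul_pos (pow_pos ha0 2) hx) hb0) (pow_pos hy 2)
  have t23 : 0 < a^2 * (1-a) * b^3 :=
    mul_pos (mul_pos (pow_pos ha0 2) hx) (pow_pos hb0 3)
  have t30 : 0 < a^3 * (1-b)^3 := mul_pos (pow_pos ha0 3) (pow_pos hy 3)
  have t31 : 0 < a^3 * b * (1-b)^2 :=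
    mul_pos (mul_pos (pow_pos ha0 3) hb0) (pow_pos hy 2)
  have t32 : 0 < a^3 * b^2 * (1-b) :=
    mul_pos (mul_pos (pow_pos ha0 3) (pow_pos hb0 2)) hy
  have key : L a b =
      -(4 * ((1-a)^3 * b * (1-b)^2) + 3 * ((1-a)^3 * b^2 * (1-b))
        + 3 * ((1-a)^3 * b^3) + 4 * (a * (1-a)^2 * (1-b)^3)
        + 23 * (a * (1-a)^2 * b^2 * (1-b)) + 3 * (a * (1-a)^2 * b^3)
        + 3 * (a^2 * (1-a) * (1-b)^3) + 23 * (a^2 * (1-a) * b * (1-b)^2)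
        + 4 * (a^2 * (1-a) * b^3) + 3 * (a^3 * (1-b)^3)
        + 3 * (a^3 * b * (1-b)^2) + 4 * (a^3 * b^2 * (1-b))) := by
    unfold L; ring
  rw [key]
  linarith
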